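/- arXiv:math/0409544 — 5 statements merged into one kernel-verified Lean document; each statement's English description precedes it below -/
import Mathlib

section
/- The series ∑_{n≥1} n·(x_{n+1} − x_n) diverges, where x_n = g^n(0) and g : (−1,1) → (0,1) is defined by g(x) = (1+x)²/4. -/
/-- The series `∑ n·(x_{n+1} − x_n)` diverges, where `x_n = g^[n] 0` and
`g x = (1+x)^2/4`. -/
theorem stmt_0 (g : ℝ → ℝ) (hg : ∀ x, g x = (1 + x) ^ 2 / 4) :
    ¬ Summable (fun n : ℕ => (n : ℝ) * (g^[n + 1] 0 - g^[n] 0)) := by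
  set x : ℕ → ℝ := fun n => g^[n] 0 with hx
  have hx0 : x 0 = 0 := rfl
  have hxs : ∀ n, x (n + 1) = (1 + x n) ^ 2 / 4 := by
    intro n
    simp only [hx, Function.iterate_succ_apply', hg]
  -- key bound: 2/(n+2) ≤ 1 - x n ≤ 1
  have key : ∀ n : ℕ, 2 / ((n : ℝ) + 2) ≤ 1 - x n ∧ 1 - x n ≤ 1 := by
    intro n
    induction n with
    | zero => norm_num [hx0]
    | succ n ih =>
      obtain ⟨h1, h2⟩ := ih
      have hn : (0:ℝ) < (n:ℝ) + 2 := by positivity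
      have hn3 : (0:ℝ) < (n:ℝ) + 3 := by positivity
      have ha : 2 / ((n:ℝ) + 2) ≤ 1 := by
        rw [div_le_one hn]; linarith
      set e := 1 - x n with he
      have hxn1 : 1 - x (n + 1) = e - e ^ 2 / 4 := by
        rw [hxs n, he]; ring
      clear_value e
      constructor
      · rw [hxn1]
        push_cast
        rw [div_le_iff₀ (by positivity : (0:ℝ) < (n:ℝ) + 1 + 2)]
        have h1' : 2 ≤ e * ((n:ℝ) + 2) := by
          rw [div_le_iff₀ hn] at h1; linarith
        have hu2 : e * ((n:ℝ) + 2) ≤ (n:ℝ) + 2 := by nlinarith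
        have hN : (0:ℝ) ≤ (n:ℝ) := Nat.cast_nonneg n
        have hq : 0 ≤ (e * ((n:ℝ)+2) - 2) * (((n:ℝ)+2) - (e * ((n:ℝ)+2) + 2)/4) :=
          mul_nonneg (by linarith) (by linarith)
        have hfinal : 2 * (((n:ℝ)+2)^2) ≤ ((e - e^2/4) * ((n:ℝ)+1+2)) * (((n:ℝ)+2)^2) := by
          nlinarith [hq, mul_nonneg hq hn3.le]
        have := le_of_mul_le_mul_right hfinal (by positivity : (0:ℝ) < ((n:ℝ)+2)^2)
        linarith
      · rw [hxn1]
        nlinarith [sq_nonneg e]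
  intro hs
  -- the terms dominate n/(n+2)^2
  have hterm : ∀ n : ℕ, (n : ℝ) / ((n : ℝ) + 2) ^ 2 ≤ (n : ℝ) * (g^[n+1] 0 - g^[n] 0) := by
    intro n
    obtain ⟨h1, h2⟩ := key n
    have hn : (0:ℝ) < (n:ℝ) + 2 := by positivity
    have he2 : 4 / ((n:ℝ) + 2) ^ 2 ≤ (1 - x n) ^ 2 := by
      have : (2 / ((n:ℝ) + 2)) ^ 2 ≤ (1 - x n) ^ 2 := by
        apply sq_le_sq' <;> nlinarith [div_pos (by norm_num : (0:ℝ) < 2) hn]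
      calc 4 / ((n:ℝ) + 2) ^ 2 = (2 / ((n:ℝ) + 2)) ^ 2 := by rw [div_pow]; norm_num
        _ ≤ _ := this
    have hdiff : g^[n+1] 0 - g^[n] 0 = (1 - x n) ^ 2 / 4 := by
      show x (n+1) - x n = _
      rw [hxs n]; ring
    rw [hdiff]
    have : (n : ℝ) / ((n:ℝ)+2)^2 = (n:ℝ) * ((4 / ((n:ℝ)+2)^2) / 4) := by
      field_simp
    rw [this]
    apply mul_le_mul_of_nonneg_left _ (Nat.cast_nonneg n)
    linarith
  have hg_summable : Summable (fun n : ℕ => (n : ℝ) / ((n : ℝ) + 2) ^ 2) := by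
    apply Summable.of_nonneg_of_le (fun n => by positivity) hterm hs
  have hh_summable : Summable (fun n : ℕ => 2 / ((n : ℝ) + 2) ^ 2) := by
    have h2 : Summable (fun n : ℕ => 1 / (n : ℝ) ^ 2) :=
      Real.summable_one_div_nat_pow.mpr (by norm_num)
    have h3 : Summable (fun n : ℕ => 1 / ((n + 2 : ℕ) : ℝ) ^ 2) :=
      (summable_nat_add_iff (f := fun n : ℕ => 1 / (n : ℝ) ^ 2) 2).mpr h2
    have h4 : Summable (fun n : ℕ => 1 / ((n : ℝ) + 2) ^ 2) := by
      convert h3 using 2 with n; push_cast; ring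
    simpa [div_eq_mul_inv] using h4.mul_left 2
  have hsum : Summable (fun n : ℕ => 1 / ((n : ℝ) + 2)) := by
    have := hg_summable.add hh_summable
    convert this using 2 with n
    have hn : ((n:ℝ) + 2) ≠ 0 := by positivity
    field_simp
  have : Summable (fun n : ℕ => 1 / ((n : ℝ))) := by
    rw [← summable_nat_add_iff (f := fun n : ℕ => 1 / (n : ℝ)) 2]
    convert hsum using 2 with n
    exacts [rfl, by norm_num]
  exact Real.not_summable_one_div_natCast this
end

section
/- For the map g(x) = (1+x)²/4 with x_n = g^n(0), the quantity 1 − x_n is asymptotically comparable to c/n for some constant c > 0; in particular there exists c > 0 and N such that 1 − x_n ≥ c/n for all n ≥ N. -/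
/-!
With `y n = 1 - x n` the recursion becomes `y (n+1) = y n - (y n)^2 / 4`. The map
`s ↦ s - s^2/4` is increasing on `(-∞, 2]` and sends `2/(n+2)` above `2/(n+3)`, so
`y n ≥ 2/(n+2)` by induction from `y 0 = 1`.
-/

section ParabolicDecay

variable {y : ℕ → ℝ}

lemma le_one_of_succ_eq_sub_sq_div_four (h0 : y 0 = 1)
    (hsucc : ∀ n, y (n + 1) = y n - y n ^ 2 / 4) (n : ℕ) : y n ≤ 1 := by
  cases n with
  | zero => exact h0.le
  | succ n => nlinarith [hsucc n, sq_nonneg (y n - 2)]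

lemma two_div_le_of_succ_eq_sub_sq_div_four (h0 : y 0 = 1)
    (hsucc : ∀ n, y (n + 1) = y n - y n ^ 2 / 4) (n : ℕ) : 2 / ((n : ℝ) + 2) ≤ y n := by
  induction n with
  | zero => norm_num [h0]
  | succ n ih =>
    set t : ℝ := 2 / ((n : ℝ) + 2) with ht
    have hy1 := le_one_of_succ_eq_sub_sq_div_four h0 hsucc n
    have hmono : t - t ^ 2 / 4 ≤ y (n + 1) := by
      rw [hsucc]; nlinarith
    have hstep : 2 / ((n + 1 : ℕ) + 2 : ℝ) ≤ t - t ^ 2 / 4 := by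
      rw [ht]
      push_cast
      field_simp
      nlinarith
    linarith

end ParabolicDecay

/-- For `g x = (1+x)^2/4` and `x_n = g^[n] 0`, there are `c > 0` and `N` with
`1 - x_n ≥ c / n` for all `n ≥ N`. -/
theorem stmt_1 (g : ℝ → ℝ) (hg : ∀ x, g x = (1 + x) ^ 2 / 4) :
    ∃ c > (0 : ℝ), ∃ N : ℕ, ∀ n ≥ N, 1 - g^[n] 0 ≥ c / n := by
  have hsucc (n : ℕ) : 1 - g^[n + 1] 0 = (1 - g^[n] 0) - (1 - g^[n] 0) ^ 2 / 4 := by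
    rw [Function.iterate_succ_apply', hg]; ring
  refine ⟨2 / 3, by norm_num, 1, fun n hn => ?_⟩
  have hn : (1 : ℝ) ≤ n := by exact_mod_cast hn
  have hbound := two_div_le_of_succ_eq_sub_sq_div_four (y := fun n => 1 - g^[n] 0)
    (by simp) hsucc n
  calc 2 / 3 / (n : ℝ) = 2 / (3 * n) := by rw [div_div]
    _ ≤ 2 / (n + 2) := by gcongr; linarith
    _ ≤ 1 - g^[n] 0 := hbound
end

section
/- Let μ_n, ν_n, ρ_n be finite Borel measures on a compact metric space with μ_n ≤ ν_n + ρ_n, where dν_n/dm ≤ C uniformly and ρ_n(M) ≤ ε for all n. Then any weak* accumulation point μ of (μ_n) satisfies: for every Borel set A, μ(A) ≤ C·m(A) + ε; in particular if this holds for every ε > 0 (with C = C(ε) allowed to depend on ε), μ is absolutely continuous with respect to m. -/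
open MeasureTheory Filter
open scoped ENNReal NNReal

/-- If `μ_n ≤ ν_n + ρ_n` with `ν_n` of density at most `C` w.r.t. `m` and
`ρ_n(M) ≤ ε`, then any weak* accumulation point `μ` of `(μ_n)` satisfies
`μ(A) ≤ C·m(A) + ε` for every Borel set `A`. -/
theorem stmt_12 {M : Type*} [MetricSpace M] [CompactSpace M]
    [MeasurableSpace M] [BorelSpace M]
    (m : Measure M) [IsProbabilityMeasure m]
    (μn νn ρn : ℕ → Measure M)
    (hμfin : ∀ n, IsFiniteMeasure (μn n))
    (C ε : ℝ≥0)
    (hle : ∀ n, μn n ≤ νn n + ρn n)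
    (hdens : ∀ n, νn n ≤ (C : ℝ≥0∞) • m)
    (hρ : ∀ n, ρn n Set.univ ≤ (ε : ℝ≥0∞))
    (μ : Measure M) [IsFiniteMeasure μ]
    (φ : ℕ → ℕ) (hφ : StrictMono φ)
    (hweak : ∀ g : C(M, ℝ), Tendsto
      (fun k : ℕ => ∫ x, g x ∂(μn (φ k))) atTop (nhds (∫ x, g x ∂μ))) :
    ∀ A : Set M, MeasurableSet A → μ A ≤ (C : ℝ≥0∞) * m A + (ε : ℝ≥0∞) := by
  intro A hA
  -- Each μn satisfies the bound on every set
  have hbound : ∀ n (s : Set M), μn n s ≤ (C : ℝ≥0∞) * m s + ε := by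
    intro n s
    calc μn n s ≤ (νn n + ρn n) s := (hle n) s
      _ = νn n s + ρn n s := rfl
      _ ≤ (C : ℝ≥0∞) * m s + ε := by
          gcongr
          · exact (hdens n) s
          · exact le_trans (measure_mono (Set.subset_univ s)) (hρ n)
  -- key claim: for every open U, μ U ≤ C * m U + ε
  have key : ∀ U : Set M, IsOpen U → μ U ≤ (C : ℝ≥0∞) * m U + ε := by
    intro U hU
    set R : ℝ≥0∞ := (C : ℝ≥0∞) * m U + ε with hR
    have hRne : R ≠ ∞ := by
      apply ENNReal.add_ne_top.2
      exact ⟨ENNReal.mul_ne_top ENNReal.coe_ne_top (measure_ne_top m U), ENNReal.coe_ne_top⟩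
    rw [hU.measure_eq_iSup_isClosed μ]
    refine iSup_le fun F => iSup_le fun hFU => iSup_le fun hF => ?_
    -- Urysohn function: 0 on Uᶜ, 1 on F
    obtain ⟨f, hf0, hf1, hf01⟩ := exists_continuous_zero_one_of_isClosed
      hU.isClosed_compl hF (disjoint_compl_left.mono_right hFU)
    have hfint : Integrable (fun x => f x) μ := f.continuous.integrable_of_hasCompactSupport
      (HasCompactSupport.of_compactSpace f)
    have hfnn : ∀ x, 0 ≤ f x := fun x => (hf01 x).1
    have h1 : μ F ≤ ENNReal.ofReal (∫ x, f x ∂μ) :=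
      hfint.measure_le_integral (Filter.Eventually.of_forall hfnn)
        (fun x hx => (hf1 hx).ge)
    refine h1.trans ?_
    -- each approximating integral is bounded by R.toReal
    have hk : ∀ k : ℕ, ∫ x, f x ∂(μn (φ k)) ≤ R.toReal := by
      intro k
      have h2 : ENNReal.ofReal (∫ x, f x ∂(μn (φ k))) ≤ μn (φ k) U :=
        integral_le_measure (fun x _ => (hf01 x).2) (fun x hx => (hf0 hx).le)
      have h3 : ENNReal.ofReal (∫ x, f x ∂(μn (φ k))) ≤ R :=
        h2.trans (hbound _ U)
      rcases le_or_gt (∫ x, f x ∂(μn (φ k))) 0 with h | h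
      · exact h.trans ENNReal.toReal_nonneg
      · exact (ENNReal.ofReal_le_iff_le_toReal hRne).1 h3
    have hlim : ∫ x, f x ∂μ ≤ R.toReal := le_of_tendsto' (hweak f) hk
    calc ENNReal.ofReal (∫ x, f x ∂μ) ≤ ENNReal.ofReal R.toReal :=
          ENNReal.ofReal_le_ofReal hlim
      _ = R := ENNReal.ofReal_toReal hRne
  -- now use outer regularity of m
  refine ENNReal.le_of_forall_pos_le_add fun δ hδ _ => ?_
  have hδ' : (0 : ℝ≥0∞) < (δ : ℝ≥0∞) / (C + 1) := by
    apply ENNReal.div_pos (by exact_mod_cast hδ.ne')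
    exact ENNReal.add_ne_top.2 ⟨ENNReal.coe_ne_top, ENNReal.one_ne_top⟩
  have hlt : m A < m A + (δ : ℝ≥0∞) / (C + 1) :=
    ENNReal.lt_add_right (measure_ne_top m A) hδ'.ne'
  obtain ⟨U, hAU, hUopen, hUlt⟩ := A.exists_isOpen_lt_of_lt _ hlt
  have hCU : (C : ℝ≥0∞) * m U ≤ (C : ℝ≥0∞) * m A + δ := by
    calc (C : ℝ≥0∞) * m U ≤ (C : ℝ≥0∞) * (m A + (δ : ℝ≥0∞) / (C + 1)) :=
          mul_le_mul_right hUlt.le _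
      _ = (C : ℝ≥0∞) * m A + (C : ℝ≥0∞) * ((δ : ℝ≥0∞) / (C + 1)) := by ring
      _ ≤ (C : ℝ≥0∞) * m A + δ := by
          gcongr
          calc (C : ℝ≥0∞) * ((δ : ℝ≥0∞) / (C + 1))
              ≤ ((C : ℝ≥0∞) + 1) * ((δ : ℝ≥0∞) / (C + 1)) :=
                mul_le_mul_left le_self_add _
            _ = δ := ENNReal.mul_div_cancel
                (by simp) (ENNReal.add_ne_top.2 ⟨ENNReal.coe_ne_top, ENNReal.one_ne_top⟩)
  calc μ A ≤ μ U := measure_mono hAU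
    _ ≤ (C : ℝ≥0∞) * m U + ε := key U hUopen
    _ ≤ ((C : ℝ≥0∞) * m A + δ) + ε := by gcongr
    _ = (C : ℝ≥0∞) * m A + ε + δ := by ring
end

section
/- Let 0 < σ < 1, b > 0, and let ρ be a finite measure on M satisfying ρ(B_i) ≤ C₂·∑_{k≥i} k·a_k for all i ≥ 1, where B_i = {x : dist(x,S) ≤ σ^{bi}} and a_k ≥ 0 with a_k ≤ C·k^{−p}, p > 4. Then ∫_M (−log dist_δ(x,S)) dρ < ∞. -/
open MeasureTheory Metric
open scoped ENNReal

/-- Truncated distance `dist_δ(x,S)`. -/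
noncomputable def distTrunc {M : Type*} [MetricSpace M] (S : Set M) (δ : ℝ) (x : M) : ℝ :=
  if infDist x S ≤ δ then infDist x S else 1

/-- If `ρ(B_i) ≤ C₂·∑_{k≥i} k·a_k` for all `i ≥ 1`, where
`B_i = {x : dist(x,S) ≤ σ^{bi}}` and `0 ≤ a_k ≤ C·k^{-p}` with `p > 4`, then
`∫ -log dist_δ(·,S) dρ < ∞`, i.e. the function is `ρ`-integrable. -/
theorem stmt_15 {M : Type*} [MetricSpace M] [MeasurableSpace M] [BorelSpace M]
    (ρ : Measure M) [IsFiniteMeasure ρ] (S : Set M)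
    (σ b δ p C C₂ : ℝ) (hσ0 : 0 < σ) (hσ1 : σ < 1) (hb : 0 < b)
    (hδ0 : 0 < δ) (hδ1 : δ < 1) (hp : 4 < p) (hC : 0 < C) (hC₂ : 0 < C₂)
    (a : ℕ → ℝ) (ha : ∀ k, 0 ≤ a k)
    (habd : ∀ k : ℕ, 1 ≤ k → a k ≤ C * (k : ℝ) ^ (-p))
    (hρB : ∀ i : ℕ, 1 ≤ i →
      (ρ {x : M | infDist x S ≤ σ ^ (b * i : ℝ)}).toReal
        ≤ C₂ * ∑' k : ℕ, (if i ≤ k then (k : ℝ) * a k else 0)) :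
    Integrable (fun x => -Real.log (distTrunc S δ x)) ρ := by
  classical
  set r : ℝ := σ ^ (b : ℝ) with hrdef
  have hr0 : 0 < r := Real.rpow_pos_of_pos hσ0 b
  have hr1 : r < 1 := Real.rpow_lt_one hσ0.le hσ1 hb
  have hrn : ∀ n : ℕ, σ ^ (b * n : ℝ) = r ^ n := by
    intro n
    rw [hrdef, ← Real.rpow_natCast (σ ^ (b : ℝ)) n, ← Real.rpow_mul hσ0.le]
  set c : ℝ := -(b * Real.log σ) with hcdef
  have hlogσ : Real.log σ < 0 := Real.log_neg hσ0 hσ1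
  have hc : 0 < c := by rw [hcdef]; nlinarith
  have hlogr : Real.log r = b * Real.log σ := Real.log_rpow hσ0 b
  have hd_nonneg : ∀ x : M, 0 ≤ infDist x S := fun x => infDist_nonneg
  have hf_nonneg : ∀ x : M, 0 ≤ -Real.log (distTrunc S δ x) := by
    intro x
    unfold distTrunc
    split
    · next h => exact neg_nonneg.2 (Real.log_nonpos (hd_nonneg x) (h.trans hδ1.le))
    · simp
  have hmeas_d : Measurable fun x : M => infDist x S := (continuous_infDist_pt S).measurable
  have hmB : ∀ t : ℝ, MeasurableSet {x : M | infDist x S ≤ t} := by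
    intro t
    exact hmeas_d measurableSet_Iic
  have hmeasf : Measurable fun x => -Real.log (distTrunc S δ x) := by
    apply Measurable.neg
    apply Real.measurable_log.comp
    unfold distTrunc
    exact Measurable.ite (hmB δ) hmeas_d measurable_const
  set Bset : ℕ → Set M := fun i => {x : M | infDist x S ≤ r ^ i} with hBdef
  have hmBset : ∀ i, MeasurableSet (Bset i) := fun i => hmB _
  set G : M → ℝ≥0∞ := fun x => ENNReal.ofReal c
      + ∑' j : ℕ, (Bset (j+1)).indicator (fun _ => ENNReal.ofReal (((j:ℝ)+2) * c)) x with hGdef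
  -- pointwise bound
  have hpoint : ∀ x, ENNReal.ofReal (-Real.log (distTrunc S δ x)) ≤ G x := by
    intro x
    by_cases h1 : infDist x S ≤ δ
    · rw [distTrunc, if_pos h1]
      rcases eq_or_lt_of_le (hd_nonneg x) with h0 | h0
      · rw [← h0]
        simp only [Real.log_zero, neg_zero, ENNReal.ofReal_zero]
        exact zero_le
      by_cases h2 : infDist x S ≤ r ^ 1
      · -- deep case
        have hex : ∃ n, r ^ n < infDist x S := exists_pow_lt_of_lt_one h0 hr1
        set m := Nat.find hex with hm
        have hmlt : r ^ m < infDist x S := Nat.find_spec hex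
        have hm2 : 2 ≤ m := by
          have hlt : r ^ m < r ^ 1 := lt_of_lt_of_le hmlt h2
          have := (pow_lt_pow_iff_right_of_lt_one₀ hr0 hr1).mp hlt
          omega
        have hprev : infDist x S ≤ r ^ (m - 1) := by
          have h := Nat.find_min hex (show m - 1 < m by omega)
          push_neg at h
          exact h
        have hxB : x ∈ Bset ((m-2)+1) := by
          show infDist x S ≤ r ^ ((m-2)+1)
          have : (m-2)+1 = m-1 := by omega
          rw [this]
          exact hprev
        have hlog : -Real.log (infDist x S) ≤ (m : ℝ) * c := by
          have hlh : Real.log (r ^ m) ≤ Real.log (infDist x S) :=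
            Real.log_le_log (pow_pos hr0 m) hmlt.le
          rw [Real.log_pow, hlogr] at hlh
          rw [hcdef]
          nlinarith
        calc ENNReal.ofReal (-Real.log (infDist x S))
            ≤ ENNReal.ofReal (((((m:ℕ)-2 : ℕ):ℝ)+2) * c) := by
              apply ENNReal.ofReal_le_ofReal
              have h22 : ((m:ℕ)-2) + 2 = m := by omega
              have : ((((m:ℕ)-2 : ℕ):ℝ)+2) = (m:ℝ) := by
                calc ((((m:ℕ)-2 : ℕ):ℝ)+2) = ((((m-2)+2 : ℕ)):ℝ) := by push_cast; ring
                  _ = (m:ℝ) := by rw [h22]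
              rw [this]
              exact hlog
          _ = (Bset ((m-2)+1)).indicator (fun _ => ENNReal.ofReal (((((m:ℕ)-2:ℕ):ℝ)+2) * c)) x := by
              rw [Set.indicator_of_mem hxB]
          _ ≤ ∑' j : ℕ, (Bset (j+1)).indicator (fun _ => ENNReal.ofReal (((j:ℝ)+2) * c)) x :=
              ENNReal.le_tsum (m-2)
          _ ≤ G x := by rw [hGdef]; exact le_add_self
      · -- shallow case
        push_neg at h2
        rw [pow_one] at h2
        have hlog : -Real.log (infDist x S) ≤ c := by
          have hlh : Real.log r ≤ Real.log (infDist x S) := Real.log_le_log hr0 h2.le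
          rw [hlogr] at hlh
          rw [hcdef]
          linarith
        calc ENNReal.ofReal (-Real.log (infDist x S)) ≤ ENNReal.ofReal c :=
              ENNReal.ofReal_le_ofReal hlog
          _ ≤ G x := by rw [hGdef]; exact le_self_add
    · rw [distTrunc, if_neg h1]
      simp
  -- lintegral of G
  have hAEM : ∀ j : ℕ,
      AEMeasurable ((Bset (j+1)).indicator (fun _ => ENNReal.ofReal (((j:ℝ)+2) * c))) ρ :=
    fun j => (measurable_const.indicator (hmBset (j+1))).aemeasurable
  have hGint : ∫⁻ x, G x ∂ρ
      = ENNReal.ofReal c * ρ Set.univ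
        + ∑' j : ℕ, ENNReal.ofReal (((j:ℝ)+2) * c) * ρ (Bset (j+1)) := by
    rw [hGdef]
    rw [lintegral_add_left measurable_const, lintegral_const, lintegral_tsum hAEM]
    congr 1
    exact tsum_congr fun j => by
      rw [lintegral_indicator (hmBset (j+1)), setLIntegral_const]
  -- summability facts
  have hsum_rpow : ∀ q : ℝ, q < -1 → Summable (fun k : ℕ => (k:ℝ) ^ q) :=
    fun q hq => Real.summable_nat_rpow.mpr hq
  have hka : ∀ k : ℕ, 1 ≤ k → (k:ℝ) * a k ≤ C * (k:ℝ) ^ (1 - p) := by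
    intro k hk
    have hk0 : (0:ℝ) < k := by exact_mod_cast hk
    have habd' := habd k hk
    have h1 : (k:ℝ) * a k ≤ (k:ℝ) * (C * (k:ℝ) ^ (-p)) :=
      mul_le_mul_of_nonneg_left habd' hk0.le
    have h2 : (k:ℝ) * (k:ℝ) ^ (-p) = (k:ℝ) ^ (1 - p) := by
      nth_rewrite 1 [← Real.rpow_one (k:ℝ)]
      rw [← Real.rpow_add hk0, sub_eq_add_neg]
    calc (k:ℝ) * a k ≤ (k:ℝ) * (C * (k:ℝ) ^ (-p)) := h1
      _ = C * ((k:ℝ) * (k:ℝ) ^ (-p)) := by ring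
      _ = C * (k:ℝ) ^ (1 - p) := by rw [h2]
  have hTsummable : ∀ i : ℕ, 1 ≤ i →
      Summable (fun k : ℕ => if i ≤ k then (k:ℝ) * a k else 0) := by
    intro i hi
    refine Summable.of_nonneg_of_le (f := fun k : ℕ => C * (k:ℝ) ^ (1 - p)) ?_ ?_
      ((hsum_rpow (1-p) (by linarith)).mul_left C)
    · intro k
      split_ifs
      · exact mul_nonneg (Nat.cast_nonneg k) (ha k)
      · exact le_rfl
    · intro k
      split_ifs with h
      · exact hka k (le_trans hi h)
      · positivity
  have hρ' : ∀ j : ℕ, ρ (Bset (j+1))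
      ≤ ENNReal.ofReal (C₂ * ∑' k : ℕ, (if j+1 ≤ k then (k:ℝ) * a k else 0)) := by
    intro j
    have h1 := hρB (j+1) (by omega)
    rw [hrn (j+1)] at h1
    rw [← ENNReal.ofReal_toReal (measure_ne_top ρ (Bset (j+1)))]
    exact ENNReal.ofReal_le_ofReal h1
  -- the key sum bound
  set gk : ℕ → ℝ := fun k => 2 * c * C * (k:ℝ) ^ (3 - p) with hgkdef
  have hgk_nonneg : ∀ k, 0 ≤ gk k := by
    intro k
    rw [hgkdef]
    positivity
  have hgk_summable : Summable gk := by
    rw [hgkdef]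
    exact (hsum_rpow (3-p) (by linarith)).mul_left (2*c*C)
  have hinner : ∀ k : ℕ,
      (∑' j : ℕ, ENNReal.ofReal (((j:ℝ)+2) * c)
        * ENNReal.ofReal (if j+1 ≤ k then (k:ℝ) * a k else 0))
      ≤ ENNReal.ofReal (gk k) := by
    intro k
    have hzero : ∀ j ∉ Finset.range k,
        ENNReal.ofReal (((j:ℝ)+2) * c)
          * ENNReal.ofReal (if j+1 ≤ k then (k:ℝ) * a k else 0) = 0 := by
      intro j hj
      rw [Finset.mem_range, not_lt] at hj
      rw [if_neg (by omega)]
      simp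
    rw [tsum_eq_sum hzero]
    rcases Nat.eq_zero_or_pos k with hk0 | hk1
    · subst hk0
      simp [hgk_nonneg 0]
    have hbnd : ∀ j ∈ Finset.range k,
        ENNReal.ofReal (((j:ℝ)+2) * c)
          * ENNReal.ofReal (if j+1 ≤ k then (k:ℝ) * a k else 0)
        ≤ ENNReal.ofReal (((k:ℝ)+1) * c) * ENNReal.ofReal ((k:ℝ) * a k) := by
      intro j hj
      rw [Finset.mem_range] at hj
      rw [if_pos (by omega)]
      refine mul_le_mul' (ENNReal.ofReal_le_ofReal ?_) le_rfl
      have : (j:ℝ) + 2 ≤ (k:ℝ) + 1 := by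
        have : (j:ℝ) + 1 ≤ (k:ℝ) := by exact_mod_cast hj
        linarith
      nlinarith
    calc (∑ j ∈ Finset.range k, ENNReal.ofReal (((j:ℝ)+2) * c)
            * ENNReal.ofReal (if j+1 ≤ k then (k:ℝ) * a k else 0))
        ≤ (Finset.range k).card
            • (ENNReal.ofReal (((k:ℝ)+1) * c) * ENNReal.ofReal ((k:ℝ) * a k)) :=
          Finset.sum_le_card_nsmul _ _ _ hbnd
      _ = (k : ℝ≥0∞) * ENNReal.ofReal ((((k:ℝ)+1) * c) * ((k:ℝ) * a k)) := by
          rw [Finset.card_range, nsmul_eq_mul, ← ENNReal.ofReal_mul (by positivity)]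
      _ = ENNReal.ofReal ((k:ℝ) * ((((k:ℝ)+1) * c) * ((k:ℝ) * a k))) := by
          rw [ENNReal.ofReal_mul (Nat.cast_nonneg k), ENNReal.ofReal_natCast]
      _ ≤ ENNReal.ofReal (gk k) := by
          apply ENNReal.ofReal_le_ofReal
          show (k:ℝ) * ((((k:ℝ)+1) * c) * ((k:ℝ) * a k)) ≤ 2 * c * C * (k:ℝ) ^ (3 - p)
          have hkR : (1:ℝ) ≤ (k:ℝ) := by exact_mod_cast hk1
          have hk0R : (0:ℝ) < (k:ℝ) := by linarith
          have hpow : (k:ℝ)^(3:ℕ) * (k:ℝ) ^ (-p) = (k:ℝ) ^ (3 - p) := by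
            rw [← Real.rpow_natCast (k:ℝ) 3, ← Real.rpow_add hk0R]
            norm_num [sub_eq_add_neg]
          have hak := habd k hk1
          have hrp : (0:ℝ) ≤ (k:ℝ) ^ (-p) := Real.rpow_nonneg hk0R.le _
          have h2k : (k:ℝ) + 1 ≤ 2 * (k:ℝ) := by linarith
          have e1 : (k:ℝ) * ((((k:ℝ)+1) * c) * ((k:ℝ) * a k))
              = (c * ((k:ℝ) * (k:ℝ) * ((k:ℝ)+1))) * a k := by ring
          have e2 : 2 * c * C * ((k:ℝ)^(3:ℕ) * (k:ℝ) ^ (-p))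
              = (c * ((k:ℝ) * (k:ℝ) * (2 * (k:ℝ)))) * (C * (k:ℝ) ^ (-p)) := by ring
          rw [← hpow, e1, e2]
          refine mul_le_mul ?_ hak (ha k) (mul_nonneg hc.le (by positivity))
          refine mul_le_mul_of_nonneg_left ?_ hc.le
          nlinarith
    done
  -- assemble the tail sum
  have htail : (∑' j : ℕ, ENNReal.ofReal (((j:ℝ)+2) * c) * ρ (Bset (j+1)))
      ≤ ENNReal.ofReal C₂ * ENNReal.ofReal (∑' k, gk k) := by
    have step1 : ∀ j : ℕ, ENNReal.ofReal (((j:ℝ)+2) * c) * ρ (Bset (j+1))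
        ≤ ENNReal.ofReal C₂ * ∑' k : ℕ, ENNReal.ofReal (((j:ℝ)+2) * c)
            * ENNReal.ofReal (if j+1 ≤ k then (k:ℝ) * a k else 0) := by
      intro j
      calc ENNReal.ofReal (((j:ℝ)+2) * c) * ρ (Bset (j+1))
          ≤ ENNReal.ofReal (((j:ℝ)+2) * c)
            * ENNReal.ofReal (C₂ * ∑' k : ℕ, (if j+1 ≤ k then (k:ℝ) * a k else 0)) :=
            mul_le_mul' le_rfl (hρ' j)
        _ = ENNReal.ofReal C₂ * (ENNReal.ofReal (((j:ℝ)+2) * c)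
            * ENNReal.ofReal (∑' k : ℕ, (if j+1 ≤ k then (k:ℝ) * a k else 0))) := by
            rw [ENNReal.ofReal_mul hC₂.le]
            ring
        _ = ENNReal.ofReal C₂ * (ENNReal.ofReal (((j:ℝ)+2) * c)
            * ∑' k : ℕ, ENNReal.ofReal (if j+1 ≤ k then (k:ℝ) * a k else 0)) := by
            rw [ENNReal.ofReal_tsum_of_nonneg
              (fun k => by split_ifs with h
                           · exact mul_nonneg (Nat.cast_nonneg k) (ha k)
                           · exact le_rfl)
              (hTsummable (j+1) (by omega))]
        _ = ENNReal.ofReal C₂ * ∑' k : ℕ, ENNReal.ofReal (((j:ℝ)+2) * c)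
            * ENNReal.ofReal (if j+1 ≤ k then (k:ℝ) * a k else 0) := by
            rw [ENNReal.tsum_mul_left]
    calc (∑' j : ℕ, ENNReal.ofReal (((j:ℝ)+2) * c) * ρ (Bset (j+1)))
        ≤ ∑' j : ℕ, ENNReal.ofReal C₂ * ∑' k : ℕ, ENNReal.ofReal (((j:ℝ)+2) * c)
            * ENNReal.ofReal (if j+1 ≤ k then (k:ℝ) * a k else 0) :=
          ENNReal.tsum_le_tsum step1
      _ = ENNReal.ofReal C₂ * ∑' j : ℕ, ∑' k : ℕ, ENNReal.ofReal (((j:ℝ)+2) * c)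
            * ENNReal.ofReal (if j+1 ≤ k then (k:ℝ) * a k else 0) := ENNReal.tsum_mul_left
      _ = ENNReal.ofReal C₂ * ∑' k : ℕ, ∑' j : ℕ, ENNReal.ofReal (((j:ℝ)+2) * c)
            * ENNReal.ofReal (if j+1 ≤ k then (k:ℝ) * a k else 0) := by
          rw [ENNReal.tsum_comm]
      _ ≤ ENNReal.ofReal C₂ * ∑' k : ℕ, ENNReal.ofReal (gk k) :=
          mul_le_mul' le_rfl (ENNReal.tsum_le_tsum hinner)
      _ = ENNReal.ofReal C₂ * ENNReal.ofReal (∑' k, gk k) := by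
          rw [ENNReal.ofReal_tsum_of_nonneg hgk_nonneg hgk_summable]
  -- finish
  refine ⟨hmeasf.aestronglyMeasurable, ?_⟩
  rw [hasFiniteIntegral_iff_ofReal (Filter.Eventually.of_forall hf_nonneg)]
  calc ∫⁻ x, ENNReal.ofReal (-Real.log (distTrunc S δ x)) ∂ρ
      ≤ ∫⁻ x, G x ∂ρ := lintegral_mono hpoint
    _ = ENNReal.ofReal c * ρ Set.univ
        + ∑' j : ℕ, ENNReal.ofReal (((j:ℝ)+2) * c) * ρ (Bset (j+1)) := hGint
    _ ≤ ENNReal.ofReal c * ρ Set.univ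
        + ENNReal.ofReal C₂ * ENNReal.ofReal (∑' k, gk k) := add_le_add le_rfl htail
    _ < ⊤ := by
        apply ENNReal.add_lt_top.mpr
        constructor
        · exact ENNReal.mul_lt_top ENNReal.ofReal_lt_top (measure_lt_top ρ _)
        · exact ENNReal.mul_lt_top ENNReal.ofReal_lt_top ENNReal.ofReal_lt_top
end

section
/- For the circle map f induced by f(x) = 2√x − 1 for x ∈ [0,1] and f(x) = 1 − 2√|x| for x ∈ [−1,0), normalized Lebesgue measure on [−1,1] is f-invariant. -/
/-!
On `[-1, 1]` the map has two increasing branches onto `[-1, 1]`, with inverse branches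
`t ↦ ((1 + t) / 2) ^ 2` on `[0, 1]` and `t ↦ -((1 - t) / 2) ^ 2` on `[-1, 0]`. Hence the part of
`[-1, 1]` mapped into `[-1, t]` is `[-1, -((1 - t) / 2) ^ 2] ∪ [0, ((1 + t) / 2) ^ 2]`, whose
length `1 - ((1 - t) / 2) ^ 2 + ((1 + t) / 2) ^ 2 = 1 + t` is that of `[-1, t]`. A finite measure
on `ℝ` is determined by its values on the rays `(-∞, t]`.
-/

open MeasureTheory Set
open scoped ENNReal

noncomputable def sqrtCircleMap (x : ℝ) : ℝ :=
  if 0 ≤ x then 2 * Real.sqrt x - 1 else 1 - 2 * Real.sqrt |x|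

lemma measurable_sqrtCircleMap : Measurable sqrtCircleMap :=
  Measurable.ite measurableSet_Ici (by fun_prop) (by fun_prop)

lemma sqrtCircleMap_le_iff_of_nonneg {x t : ℝ} (hx : 0 ≤ x) (ht : -1 ≤ t) :
    sqrtCircleMap x ≤ t ↔ x ≤ ((1 + t) / 2) ^ 2 := by
  rw [sqrtCircleMap, if_pos hx, ← Real.sqrt_le_left (by linarith)]
  constructor <;> intro <;> linarith

lemma sqrtCircleMap_le_iff_of_neg {x t : ℝ} (hx : x < 0) (ht : t ≤ 1) :
    sqrtCircleMap x ≤ t ↔ ((1 - t) / 2) ^ 2 ≤ -x := by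
  rw [sqrtCircleMap, if_neg hx.not_ge, abs_of_neg hx,
    ← Real.le_sqrt (by linarith) (by linarith)]
  constructor <;> intro <;> linarith

lemma mapsTo_sqrtCircleMap : MapsTo sqrtCircleMap (Icc (-1) 1) (Icc (-1) 1) := by
  rintro x ⟨hx₁, hx₂⟩
  rcases le_or_gt 0 x with hx | hx
  · refine ⟨?_, (sqrtCircleMap_le_iff_of_nonneg hx (by norm_num)).2 (by norm_num; linarith)⟩
    rw [sqrtCircleMap, if_pos hx]
    linarith [Real.sqrt_nonneg x]
  · refine ⟨?_, (sqrtCircleMap_le_iff_of_neg hx le_rfl).2 (by norm_num; linarith)⟩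
    rw [sqrtCircleMap, if_neg hx.not_ge]
    linarith [Real.sqrt_le_one.2 (show |x| ≤ 1 from abs_le.2 ⟨hx₁, by linarith⟩)]

lemma sqrtCircleMap_preimage_Iic_inter_Icc {t : ℝ} (ht : t ∈ Icc (-1) 1) :
    sqrtCircleMap ⁻¹' Iic t ∩ Icc (-1) 1 =
      Icc (-1) (-((1 - t) / 2) ^ 2) ∪ Icc 0 (((1 + t) / 2) ^ 2) := by
  obtain ⟨ht₁, ht₂⟩ := ht
  ext x
  simp only [mem_inter_iff, mem_preimage, mem_Iic, mem_Icc, mem_union]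
  rcases le_or_gt 0 x with hx | hx
  · rw [sqrtCircleMap_le_iff_of_nonneg hx ht₁]
    constructor
    · rintro ⟨h, -⟩; exact Or.inr ⟨hx, h⟩
    · rintro (⟨-, h⟩ | ⟨-, h⟩)
      · have hx0 : x ≤ 0 := h.trans (neg_nonpos.2 (sq_nonneg _))
        exact ⟨hx0.trans (sq_nonneg _), by linarith, by linarith⟩
      · exact ⟨h, by linarith, by nlinarith⟩
  · rw [sqrtCircleMap_le_iff_of_neg hx ht₂]
    constructor
    · rintro ⟨h, h₁, -⟩; exact Or.inl ⟨h₁, by linarith⟩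
    · rintro (⟨h₁, h⟩ | ⟨h, -⟩)
      · exact ⟨by linarith, h₁, by linarith⟩
      · linarith

lemma volume_sqrtCircleMap_preimage_Iic_inter_Icc {t : ℝ} (ht : t ∈ Icc (-1) 1) :
    volume (sqrtCircleMap ⁻¹' Iic t ∩ Icc (-1) 1) = ENNReal.ofReal (1 + t) := by
  -- for `t = 1` the two intervals share the point `0`
  have hdisj : AEDisjoint volume (Icc (-1 : ℝ) (-((1 - t) / 2) ^ 2)) (Icc 0 (((1 + t) / 2) ^ 2)) :=
    measure_mono_null (fun x ⟨hx, hx'⟩ => le_antisymm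
      (by nlinarith [hx.2]) hx'.1) (measure_singleton 0)
  rw [sqrtCircleMap_preimage_Iic_inter_Icc ht,
    measure_union₀ measurableSet_Icc.nullMeasurableSet hdisj, Real.volume_Icc, Real.volume_Icc,
    ← ENNReal.ofReal_add (by nlinarith [ht.1, ht.2]) (by nlinarith [ht.1, ht.2])]
  congr 1
  ring

lemma volume_sqrtCircleMap_preimage_Iic_inter_Icc_eq (a : ℝ) :
    volume (sqrtCircleMap ⁻¹' Iic a ∩ Icc (-1) 1) = volume (Iic a ∩ Icc (-1) 1) := by
  rcases lt_or_ge a (-1) with ha | ha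
  · have hempty : ∀ s, s ∩ Icc (-1) 1 ⊆ Iic a → s ∩ Icc (-1) 1 = ∅ := fun s hs =>
      eq_empty_of_forall_notMem fun x hx => by
        have : x ≤ a := hs hx
        linarith [hx.2.1]
    rw [hempty (Iic a) inter_subset_left, hempty (sqrtCircleMap ⁻¹' Iic a) fun x hx => ?_]
    have h₁ : -1 ≤ sqrtCircleMap x := (mapsTo_sqrtCircleMap hx.2).1
    have h₂ : sqrtCircleMap x ≤ a := hx.1
    linarith
  · set t := min a 1
    have ht : t ∈ Icc (-1) 1 := ⟨le_min ha (by norm_num), min_le_right a 1⟩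
    have hpre : sqrtCircleMap ⁻¹' Iic a ∩ Icc (-1) 1 = sqrtCircleMap ⁻¹' Iic t ∩ Icc (-1) 1 := by
      ext x
      simp only [mem_inter_iff, mem_preimage, mem_Iic, t, le_min_iff]
      exact ⟨fun h => ⟨⟨h.1, (mapsTo_sqrtCircleMap h.2).2⟩, h.2⟩, fun h => ⟨h.1.1, h.2⟩⟩
    have hIic : Iic a ∩ Icc (-1) 1 = Icc (-1) t := by
      ext x
      simp only [mem_inter_iff, mem_Iic, mem_Icc, t, le_min_iff]
      tauto
    rw [hpre, hIic, volume_sqrtCircleMap_preimage_Iic_inter_Icc ht, Real.volume_Icc,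
      sub_neg_eq_add, add_comm]

lemma measurePreserving_sqrtCircleMap :
    MeasurePreserving sqrtCircleMap (volume.restrict (Icc (-1) 1))
      (volume.restrict (Icc (-1) 1)) := by
  refine ⟨measurable_sqrtCircleMap, Measure.ext_of_Iic _ _ fun a => ?_⟩
  rw [Measure.map_apply measurable_sqrtCircleMap measurableSet_Iic,
    Measure.restrict_apply (measurable_sqrtCircleMap measurableSet_Iic),
    Measure.restrict_apply measurableSet_Iic]
  exact volume_sqrtCircleMap_preimage_Iic_inter_Icc_eq a

/-- Normalized Lebesgue measure on `[-1,1]` is invariant under the circle map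
`f(x) = 2√x − 1` for `x ≥ 0`, `f(x) = 1 − 2√|x|` for `x < 0`. -/
theorem stmt_16 (f : ℝ → ℝ)
    (hf : ∀ x : ℝ, f x = if 0 ≤ x then 2 * Real.sqrt x - 1
      else 1 - 2 * Real.sqrt |x|)
    (μ : Measure ℝ)
    (hμ : μ = (2 : ℝ≥0∞)⁻¹ • (volume.restrict (Set.Icc (-1 : ℝ) 1))) :
    ∀ A : Set ℝ, MeasurableSet A → μ (f ⁻¹' A) = μ A := by
  obtain rfl : f = sqrtCircleMap := funext hf
  subst hμ
  intro A hA
  exact (measurePreserving_sqrtCircleMap.smul_measure _).measure_preimage hA.nullMeasurableSet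
end
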